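/- Let y : [T, ∞) → ℝ be nonnegative, differentiable, and satisfy y'(τ) + (1 - C·e^{-τ/2})·y(τ) ≤ A·e^{-τ/2} for all τ ≥ T, with constants A, C > 0. Then there exists a constant K > 0 (depending on A, C, T, y(T)) such that y(τ) ≤ K·e^{-τ/2} for all τ ≥ T. -/

import Mathlib

/-!
Multiplying by the integrating factor `μ τ = exp (τ + 2 C e^{-τ/2})`, for which
`μ' = (1 - C e^{-τ/2}) μ`, turns the inequality into `(μ y)' ≤ A μ e^{-τ/2} ≤ A e^D e^{τ/2}`
with `D = 2 C e^{-T/2}`. Integrating, `μ y` grows at most like `2 A e^D e^{τ/2}`, and `μ τ ≥ e^τ`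
converts this into the decay `y τ = O(e^{-τ/2})`.
-/

open Real Set

noncomputable def integratingFactor (C τ : ℝ) : ℝ := exp (τ + 2 * C * exp (-τ / 2))

lemma integratingFactor_pos (C τ : ℝ) : 0 < integratingFactor C τ := exp_pos _

lemma hasDerivAt_integratingFactor (C τ : ℝ) :
    HasDerivAt (integratingFactor C) ((1 - C * exp (-τ / 2)) * integratingFactor C τ) τ := by
  have hexp : HasDerivAt (fun t : ℝ => exp (-t / 2)) (exp (-τ / 2) * (-1 / 2)) τ :=
    (((hasDerivAt_id τ).neg.div_const 2).congr_deriv (by ring)).exp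
  have hexponent : HasDerivAt (fun t => t + 2 * C * exp (-t / 2))
      (1 + 2 * C * (exp (-τ / 2) * (-1 / 2))) τ :=
    (hasDerivAt_id' τ).add (hexp.const_mul (2 * C))
  exact hexponent.exp.congr_deriv (by unfold integratingFactor; ring)

lemma exp_le_integratingFactor {C : ℝ} (hC : 0 ≤ C) (τ : ℝ) : exp τ ≤ integratingFactor C τ :=
  exp_le_exp.2 (le_add_of_nonneg_right (by positivity))

lemma integratingFactor_mul_exp_neg_half_le {C T τ : ℝ} (hC : 0 ≤ C) (hτ : T ≤ τ) :
    integratingFactor C τ * exp (-τ / 2) ≤ exp (2 * C * exp (-T / 2)) * exp (τ / 2) := by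
  rw [integratingFactor, ← exp_add, ← exp_add]
  have : exp (-τ / 2) ≤ exp (-T / 2) := exp_le_exp.2 (by linarith)
  exact exp_le_exp.2 (by nlinarith)

lemma antitoneOn_mul_sub_of_hasDerivAt {y y' a μ F F' : ℝ → ℝ} {s : Set ℝ} (hs : Convex ℝ s)
    (hy : ∀ t ∈ s, HasDerivAt y (y' t) t) (hμ : ∀ t ∈ s, HasDerivAt μ (a t * μ t) t)
    (hF : ∀ t ∈ s, HasDerivAt F (F' t) t)
    (hle : ∀ t ∈ s, μ t * (y' t + a t * y t) ≤ F' t) :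
    AntitoneOn (fun t => μ t * y t - F t) s := by
  have hderiv : ∀ t ∈ s, HasDerivAt (fun t => μ t * y t - F t)
      (a t * μ t * y t + μ t * y' t - F' t) t := fun t ht =>
    ((hμ t ht).mul (hy t ht)).sub (hF t ht)
  refine antitoneOn_of_hasDerivWithinAt_nonpos hs
    (fun t ht => (hderiv t ht).continuousAt.continuousWithinAt)
    (fun t ht => (hderiv t (interior_subset ht)).hasDerivWithinAt) fun t ht => ?_
  linarith [hle t (interior_subset ht)]

lemma le_mul_exp_neg_half_of_exp_mul_le {T τ c B u : ℝ} (hτ : T ≤ τ) (hc : 0 ≤ c)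
    (h : exp τ * u ≤ c + B * exp (τ / 2)) : u ≤ (c * exp (-T / 2) + B) * exp (-τ / 2) := by
  have hinv : exp (τ / 2) * exp (-τ / 2) = 1 := by rw [← exp_add]; ring_nf; exact exp_zero
  have hT : exp (-τ / 2) ≤ exp (-T / 2) := exp_le_exp.2 (by linarith)
  have hpos := exp_pos (-τ / 2)
  calc u = exp τ * u * exp (-τ / 2) * exp (-τ / 2) := by
          rw [mul_assoc _ (exp _), ← exp_add, show -τ / 2 + -τ / 2 = -τ by ring, exp_neg]
          field_simp
    _ ≤ (c + B * exp (τ / 2)) * exp (-τ / 2) * exp (-τ / 2) := by gcongr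
    _ = (c * exp (-τ / 2) + B) * exp (-τ / 2) := by linear_combination B * exp (-τ / 2) * hinv
    _ ≤ (c * exp (-T / 2) + B) * exp (-τ / 2) := by gcongr

theorem linear_ode_ineq_half_decay
    (y y' : ℝ → ℝ) (T A C : ℝ) (hA : 0 < A) (hC : 0 < C)
    (hnonneg : ∀ τ ≥ T, 0 ≤ y τ)
    (hderiv : ∀ τ ≥ T, HasDerivAt y (y' τ) τ)
    (hineq : ∀ τ ≥ T, y' τ + (1 - C * Real.exp (-τ / 2)) * y τ ≤ A * Real.exp (-τ / 2)) :
    ∃ K > 0, ∀ τ ≥ T, y τ ≤ K * Real.exp (-τ / 2) := by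
  set μ := integratingFactor C
  set B := 2 * A * exp (2 * C * exp (-T / 2))
  have hanti : AntitoneOn (fun t => μ t * y t - B * exp (t / 2)) (Ici T) := by
    refine antitoneOn_mul_sub_of_hasDerivAt (convex_Ici T) hderiv
      (fun t _ => hasDerivAt_integratingFactor C t)
      (fun t _ => ((hasDerivAt_id' t).div_const 2).exp.const_mul B) fun t ht => ?_
    calc μ t * (y' t + (1 - C * exp (-t / 2)) * y t) ≤ μ t * (A * exp (-t / 2)) :=
          mul_le_mul_of_nonneg_left (hineq t ht) (integratingFactor_pos C t).le
      _ = A * (μ t * exp (-t / 2)) := by ring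
      _ ≤ A * (exp (2 * C * exp (-T / 2)) * exp (t / 2)) :=
          mul_le_mul_of_nonneg_left (integratingFactor_mul_exp_neg_half_le hC.le ht) hA.le
      _ = B * (exp (t / 2) * (1 / 2)) := by ring
  have hyT : 0 ≤ μ T * y T := mul_nonneg (integratingFactor_pos C T).le (hnonneg T le_rfl)
  refine ⟨μ T * y T * exp (-T / 2) + B, by positivity, fun τ hτ => ?_⟩
  refine le_mul_exp_neg_half_of_exp_mul_le hτ hyT ?_
  have hdecr := hanti self_mem_Ici hτ hτ
  have hμ := mul_le_mul_of_nonneg_right (exp_le_integratingFactor hC.le τ) (hnonneg τ hτ)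
  have : 0 ≤ B * exp (T / 2) := by positivity
  simp only at hdecr
  linarith
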